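/- arXiv:1811.07244 — 2 statements merged into one kernel-verified Lean document; each statement's English description precedes it below -/
import Mathlib

section
/- Let p be a prime with p ≡ 11 (mod 24) or p ≡ 23 (mod 24), and let k be any integer. Then there exist integers r₁, r_p, v₁, v_p with r₁ + r_p = 2k, 24v₁ = p·r₁ + r_p, and 24v_p = r₁ + p·r_p. -/
/-! The congruences are linear in `(r₁, r_p)`, so it suffices to solve them in weight one and
scale by `k`: for `p ≡ 11 (mod 24)` take `(r₁, r_p) = (-5, 7)`, for `p ≡ 23 (mod 24)` take `(1, 1)`. -/

theorem exists_exponents_of_weight_one {p r₁ rp : ℤ} (hsum : r₁ + rp = 2)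
    (h₁ : 24 ∣ p * r₁ + rp) (hp : 24 ∣ r₁ + p * rp) (k : ℤ) :
    ∃ s₁ sp v₁ vp : ℤ, s₁ + sp = 2 * k ∧ 24 * v₁ = p * s₁ + sp ∧ 24 * vp = s₁ + p * sp := by
  obtain ⟨v₁, hv₁⟩ := h₁
  obtain ⟨vp, hvp⟩ := hp
  exact ⟨k * r₁, k * rp, k * v₁, k * vp, by linear_combination k * hsum,
    by linear_combination -k * hv₁, by linear_combination -k * hvp⟩

theorem stmt_5_general (p : ℕ) (hp24 : p % 24 = 11 ∨ p % 24 = 23)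
    (k : ℤ) :
    ∃ r₁ rp v₁ vp : ℤ, r₁ + rp = 2 * k ∧
      24 * v₁ = (p : ℤ) * r₁ + rp ∧
      24 * vp = r₁ + (p : ℤ) * rp := by
  rcases hp24 with h | h
  · exact exists_exponents_of_weight_one (r₁ := -5) (rp := 7) (by norm_num) (by omega) (by omega) k
  · exact exists_exponents_of_weight_one (r₁ := 1) (rp := 1) (by norm_num) (by omega) (by omega) k

theorem stmt_5 (p : ℕ) (hp : p.Prime) (hp24 : p % 24 = 11 ∨ p % 24 = 23)
    (k : ℤ) :
    ∃ r₁ rp v₁ vp : ℤ, r₁ + rp = 2 * k ∧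
      24 * v₁ = (p : ℤ) * r₁ + rp ∧
      24 * vp = r₁ + (p : ℤ) * rp :=
  stmt_5_general p hp24 k
end

section
/- Let N be a squarefree positive integer with divisors δ, and suppose the integers (r_δ)_{δ∣N} and k satisfy Σ_{δ∣N} r_δ = 2k and 24 ∣ Σ_{δ∣N} (N/δ)·r_δ. Then gcd(gcd over proper divisors δ of N of (N/δ − 1), 24) divides 2k. -/
/-!
Every weight `N / δ` with `δ ∣ N` is `≡ 1` modulo `d`: for `δ = N` it equals `1`, and otherwise `d`
divides `N / δ - 1` by construction. Hence `Σ (N / δ) r_δ ≡ Σ r_δ = 2k (mod d)`, while the left side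
is divisible by `24`, a multiple of `d`.
-/

theorem Nat.div_modEq_one_of_dvd_gcd_divisors {N d δ : ℕ}
    (hd : d ∣ (N.divisors.erase N).gcd (fun δ => N / δ - 1)) (hδ : δ ∈ N.divisors) :
    ((N / δ : ℕ) : ℤ) ≡ 1 [ZMOD d] := by
  obtain ⟨hδN, hN⟩ := Nat.mem_divisors.mp hδ
  by_cases hδ_eq : δ = N
  · subst hδ_eq
    rw [Nat.div_self (Nat.pos_of_ne_zero hN), Nat.cast_one]
  · have hdvd : d ∣ N / δ - 1 := hd.trans (Finset.gcd_dvd (Finset.mem_erase.mpr ⟨hδ_eq, hδ⟩))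
    have hle : 1 ≤ N / δ :=
      Nat.div_pos (Nat.le_of_dvd (Nat.pos_of_ne_zero hN) hδN) (Nat.pos_of_mem_divisors hδ)
    exact_mod_cast (Int.natCast_modEq_iff.mpr ((Nat.modEq_iff_dvd' hle).mpr hdvd)).symm

theorem stmt_15_general (N : ℕ)
    (r : ℕ → ℤ) (k : ℤ)
    (h1 : ∑ δ ∈ N.divisors, r δ = 2 * k)
    (h2 : (24 : ℤ) ∣ ∑ δ ∈ N.divisors, (N / δ : ℕ) * r δ) :
    ((Nat.gcd ((N.divisors.erase N).gcd (fun δ => N / δ - 1)) 24 : ℕ) : ℤ) ∣ 2 * k := by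
  set d := Nat.gcd ((N.divisors.erase N).gcd (fun δ => N / δ - 1)) 24
  have hweight : ∀ δ ∈ N.divisors, ((N / δ : ℕ) : ℤ) * r δ ≡ r δ [ZMOD d] := fun δ hδ => by
    simpa using (Nat.div_modEq_one_of_dvd_gcd_divisors (Nat.gcd_dvd_left _ _) hδ).mul_right (r δ)
  have hd24 : (d : ℤ) ∣ 24 := Int.natCast_dvd_natCast.mpr (Nat.gcd_dvd_right _ _)
  refine Int.modEq_zero_iff_dvd.mp ?_
  calc 2 * k = ∑ δ ∈ N.divisors, r δ := h1.symm
    _ ≡ ∑ δ ∈ N.divisors, (N / δ : ℕ) * r δ [ZMOD d] := (Int.ModEq.sum hweight).symm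
    _ ≡ 0 [ZMOD d] := Int.modEq_zero_iff_dvd.mpr (hd24.trans h2)

theorem stmt_15 (N : ℕ) (hN : 0 < N) (hsq : Squarefree N)
    (r : ℕ → ℤ) (k : ℤ)
    (h1 : ∑ δ ∈ N.divisors, r δ = 2 * k)
    (h2 : (24 : ℤ) ∣ ∑ δ ∈ N.divisors, (N / δ : ℕ) * r δ) :
    ((Nat.gcd ((N.divisors.erase N).gcd (fun δ => N / δ - 1)) 24 : ℕ) : ℤ) ∣ 2 * k :=
  stmt_15_general N r k h1 h2
end
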